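/- Let the finite simple graph G be the join of two disjoint graphs G_1 and G_2 (that is, G is obtained from the disjoint union of G_1 and G_2 by adding all edges between V(G_1) and V(G_2)). If M is an acyclic matching in G, then either M ⊆ E(G_1), or M ⊆ E(G_2), or M consists of exactly one edge joining a vertex of G_1 to a vertex of G_2. -/

import Mathlib

open SimpleGraph

/-- The *join* of two disjoint graphs `G₁` and `G₂`: the graph on `V(G₁) ⊕ V(G₂)`
obtained from the disjoint union of `G₁` and `G₂` by adding all edges between
vertices of `G₁` and vertices of `G₂`. -/
def SimpleGraph.join {α β : Type*} (G₁ : SimpleGraph α) (G₂ : SimpleGraph β) :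
    SimpleGraph (α ⊕ β) where
  Adj u v :=
    match u, v with
    | Sum.inl a, Sum.inl b => G₁.Adj a b
    | Sum.inr a, Sum.inr b => G₂.Adj a b
    | Sum.inl _, Sum.inr _ => True
    | Sum.inr _, Sum.inl _ => True
  symm := by
    constructor
    rintro (a | a) (b | b) h <;> simp_all [SimpleGraph.adj_comm]
  loopless := by
    constructor
    rintro (a | a) h <;> simp_all

/-! A forest contains no triangle, and two distinct vertices of a forest have at most one
common neighbour. In the join every vertex of `G₁` is adjacent to every vertex of `G₂`. So if
`V(M)` meets both sides, an edge of `M` inside one side would close a triangle with a vertex of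
`V(M)` on the other side; hence every edge of `M` joins the two sides, and two such edges `a₁b₁`,
`a₂b₂` would span the 4-cycle `a₁ b₁ a₂ b₂`. -/

namespace SimpleGraph

variable {V : Type*} {G : SimpleGraph V}

lemma IsAcyclic.not_adj_of_adj_of_adj (hG : G.IsAcyclic) {u v w : V} (huv : G.Adj u v)
    (hvw : G.Adj v w) : ¬ G.Adj u w := by
  classical
  intro huw
  exact hG.cliqueFree le_rfl {u, v, w} (is3Clique_triple_iff.mpr ⟨huv, huw, hvw⟩)

lemma IsAcyclic.commonNeighbors_subsingleton (hG : G.IsAcyclic) {u v : V} (huv : u ≠ v) :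
    (G.commonNeighbors u v).Subsingleton := by
  intro w hw x hx
  obtain ⟨huw, hvw⟩ := G.mem_commonNeighbors.mp hw
  obtain ⟨hux, hvx⟩ := G.mem_commonNeighbors.mp hx
  have hpaths := (hG.subsingleton_path u v).elim
    ⟨.cons huw (.cons hvw.symm .nil), by simp [Walk.isPath_def, huv, huw.ne, hvw.ne']⟩
    ⟨.cons hux (.cons hvx.symm .nil), by simp [Walk.isPath_def, huv, hux.ne, hvx.ne']⟩
  simpa using congrArg (fun p : G.Path u v => p.1.support) hpaths

variable {α β : Type*} {G₁ : SimpleGraph α} {G₂ : SimpleGraph β}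

lemma join_adj_of_isLeft_ne {u v : α ⊕ β} (h : u.isLeft ≠ v.isLeft) : (G₁.join G₂).Adj u v := by
  rcases u with a | a <;> rcases v with b | b <;> simp_all [join]

section InduceJoin

variable {s : Set (α ⊕ β)} (hac : ((G₁.join G₂).induce s).IsAcyclic)
include hac

lemma IsAcyclic.isLeft_ne_of_induce_join_adj {u u' v w : α ⊕ β} (hu : u ∈ s) (hu' : u' ∈ s)
    (hside : u.isLeft ≠ u'.isLeft) (hv : v ∈ s) (hw : w ∈ s) (hvw : (G₁.join G₂).Adj v w) :
    v.isLeft ≠ w.isLeft := by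
  intro hsame
  obtain ⟨x, hx, hxv⟩ : ∃ x ∈ s, x.isLeft ≠ v.isLeft := by
    by_cases h : u.isLeft = v.isLeft
    · exact ⟨u', hu', fun h' => hside (h.trans h'.symm)⟩
    · exact ⟨u, hu, h⟩
  exact hac.not_adj_of_adj_of_adj (u := ⟨x, hx⟩) (v := ⟨v, hv⟩) (w := ⟨w, hw⟩)
    (join_adj_of_isLeft_ne hxv) hvw (join_adj_of_isLeft_ne (hsame ▸ hxv))

lemma IsAcyclic.eq_or_eq_of_induce_join {a p : α} {b q : β} (ha : .inl a ∈ s) (hp : .inl p ∈ s)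
    (hb : .inr b ∈ s) (hq : .inr q ∈ s) : a = p ∨ b = q := by
  by_contra! h
  have := hac.commonNeighbors_subsingleton (u := ⟨_, ha⟩) (v := ⟨_, hp⟩) (by simpa using h.1)
    (x := ⟨_, hb⟩) ((mem_commonNeighbors _).mpr ⟨trivial, trivial⟩)
    (y := ⟨_, hq⟩) ((mem_commonNeighbors _).mpr ⟨trivial, trivial⟩)
  simp_all

end InduceJoin

variable {M : (G₁.join G₂).Subgraph}

lemma Subgraph.IsMatching.edgeSet_eq_singleton_of_join (hM : M.IsMatching)
    (hac : ((G₁.join G₂).induce M.verts).IsAcyclic)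
    (hcross : ∀ v w, M.Adj v w → v.isLeft ≠ w.isLeft) {a : α} {b : β}
    (hab : M.Adj (.inl a) (.inr b)) : M.edgeSet = {s(.inl a, .inr b)} := by
  have hunique : ∀ p q, M.Adj (.inl p) (.inr q) → p = a ∧ q = b := by
    intro p q hpq
    rcases hac.eq_or_eq_of_induce_join hpq.fst_mem hab.fst_mem hpq.snd_mem hab.snd_mem
      with rfl | rfl
    · exact ⟨rfl, Sum.inr_injective (hM.eq_of_adj_left hpq hab)⟩
    · exact ⟨Sum.inl_injective (hM.eq_of_adj_right hpq hab), rfl⟩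
  ext e
  refine ⟨fun he => ?_, by rintro rfl; exact hab⟩
  induction e using Sym2.ind with | _ v w => ?_
  rw [Subgraph.mem_edgeSet] at he
  rcases v with p | p <;> rcases w with q | q
  · exact (hcross _ _ he rfl).elim
  · obtain ⟨rfl, rfl⟩ := hunique p q he
    rfl
  · obtain ⟨rfl, rfl⟩ := hunique q p he.symm
    exact Sym2.eq_swap
  · exact (hcross _ _ he rfl).elim

end SimpleGraph

theorem acyclicMatching_of_join_general {α β : Type*}
    (G₁ : SimpleGraph α) (G₂ : SimpleGraph β)
    (M : (G₁.join G₂).Subgraph) (hM : M.IsMatching)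
    (hac : ((G₁.join G₂).induce M.verts).IsAcyclic) :
    (∀ v w, M.Adj v w → ∃ a b, v = Sum.inl a ∧ w = Sum.inl b) ∨
    (∀ v w, M.Adj v w → ∃ a b, v = Sum.inr a ∧ w = Sum.inr b) ∨
    (∃ (a : α) (b : β), M.edgeSet = {s(Sum.inl a, Sum.inr b)}) := by
  by_cases hl : ∀ v ∈ M.verts, v.isLeft
  · refine .inl fun v w h => ?_
    obtain ⟨a, rfl⟩ := Sum.isLeft_iff.mp (hl v h.fst_mem)
    obtain ⟨b, rfl⟩ := Sum.isLeft_iff.mp (hl w h.snd_mem)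
    exact ⟨a, b, rfl, rfl⟩
  by_cases hr : ∀ v ∈ M.verts, v.isRight
  · refine .inr <| .inl fun v w h => ?_
    obtain ⟨a, rfl⟩ := Sum.isRight_iff.mp (hr v h.fst_mem)
    obtain ⟨b, rfl⟩ := Sum.isRight_iff.mp (hr w h.snd_mem)
    exact ⟨a, b, rfl, rfl⟩
  push Not at hl hr
  obtain ⟨u, hu, hul⟩ := hl
  obtain ⟨u', hu', hur⟩ := hr
  obtain ⟨a, rfl⟩ := Sum.isLeft_iff.mp (Sum.not_isRight.mp hur)
  have hcross : ∀ v w, M.Adj v w → v.isLeft ≠ w.isLeft := fun v w h =>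
    hac.isLeft_ne_of_induce_join_adj hu hu' hul h.fst_mem h.snd_mem (M.adj_sub h)
  obtain ⟨w, haw, -⟩ := hM hu'
  obtain ⟨b, rfl⟩ := Sum.isRight_iff.mp (Sum.not_isLeft.mp (hcross _ _ haw).symm)
  exact .inr <| .inr ⟨a, b, hM.edgeSet_eq_singleton_of_join hac hcross haw⟩

/-- Let the finite simple graph `G` be the join of two disjoint
graphs `G₁` and `G₂`.  If `M` is an acyclic matching in `G`, then either every edge
of `M` lies inside `G₁`, or every edge of `M` lies inside `G₂`, or `M` consists of
exactly one edge joining a vertex of `G₁` to a vertex of `G₂`. -/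
theorem acyclicMatching_of_join {α β : Type*} [Fintype α] [Fintype β]
    (G₁ : SimpleGraph α) (G₂ : SimpleGraph β)
    (M : (G₁.join G₂).Subgraph) (hM : M.IsMatching)
    (hac : ((G₁.join G₂).induce M.verts).IsAcyclic) :
    (∀ v w, M.Adj v w → ∃ a b, v = Sum.inl a ∧ w = Sum.inl b) ∨
    (∀ v w, M.Adj v w → ∃ a b, v = Sum.inr a ∧ w = Sum.inr b) ∨
    (∃ (a : α) (b : β), M.edgeSet = {s(Sum.inl a, Sum.inr b)}) :=
  acyclicMatching_of_join_general G₁ G₂ M hM hac
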